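/- Let Ω ⊂ ℝ^d (d ≥ 1) be a bounded domain, p ∈ (0,1), β > 0, α ≥ 0, r > 0, ε ≥ 0 and ū ∈ L²(Ω). If v is a global minimizer over L²(Ω) of w ↦ (1/(2r))‖w − ū‖²_{L²} + β∫_Ω ψ_ε(w(x)²) dx + (α/2)‖w‖²_{L²}, then for a.e. x ∈ Ω either |v(x)| ≤ ε or |v(x)| ≥ (r·β·p·(1 − p)/(1 + α·r))^{1/(2−p)}. -/

import Mathlib

open MeasureTheory Filter Topology

/-- The smooth approximation `ψ_ε` of `t ↦ t^{p/2}`: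
`ψ_ε(t) = (p/2)·t/ε^{2−p} + (1 − p/2)·ε^p` for `0 ≤ t < ε²` and `ψ_ε(t) = t^{p/2}` for
`t ≥ ε²` (so `ψ_0(t) = t^{p/2}`). Exponents are real powers. -/
noncomputable def psi (p ε t : ℝ) : ℝ :=
  if t < ε ^ 2 then p / 2 * t / ε ^ (2 - p) + (1 - p / 2) * ε ^ p
  else t ^ (p / 2)

/-!
The objective is the integral of the pointwise integrand `proxIntegrand p β α r ε (ū x) (w x)`,
so a minimizer cannot be improved on a set of positive measure. For `y ≥ ε` one has
`ψ_ε(y²) = y^p`, and `y ↦ β y^p + (1/r + α) y²/2 + (affine)` has second derivative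
`(1/r + α) − βp(1−p) y^{p−2}`, which is negative exactly below
`c = (rβp(1−p)/(1+αr))^{1/(2−p)}`. Strict concavity on `[ε, c]` makes the integrand at any `t`
with `ε < |t| < c` strictly larger than at `ε · sign t` or at `c · sign t`. Moving `v` to the
better of the two on that set is a measurable competitor bounded by `|v| + c`, hence in `L²`,
and it would strictly lower the objective unless the set is null.
-/

open Set

section Psi

variable {p ε t : ℝ}

lemma psi_sq_of_le {y : ℝ} (hε : 0 ≤ ε) (hy : ε ≤ y) : psi p ε (y ^ 2) = y ^ p := by
  rw [psi, if_neg (pow_le_pow_left₀ hε hy 2).not_gt, ← Real.rpow_natCast,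
    ← Real.rpow_mul (hε.trans hy)]
  ring_nf

lemma measurable_psi (p ε : ℝ) : Measurable (psi p ε) :=
  Measurable.ite (measurableSet_lt measurable_id measurable_const) (by fun_prop) (by fun_prop)

lemma psi_nonneg (hp0 : 0 ≤ p) (hp2 : p ≤ 2) (hε : 0 ≤ ε) (ht : 0 ≤ t) : 0 ≤ psi p ε t := by
  unfold psi
  split_ifs
  · have : 0 ≤ 1 - p / 2 := by linarith
    positivity
  · positivity

lemma psi_le (hp0 : 0 ≤ p) (hp2 : p ≤ 2) (hε : 0 ≤ ε) (ht : 0 ≤ t) :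
    psi p ε t ≤ ε ^ p + (1 + t) := by
  unfold psi
  split_ifs with htε
  · have hε0 : 0 < ε := by
      by_contra! h
      nlinarith
    have hsplit : ε ^ p * ε ^ (2 - p) = ε ^ 2 := by
      rw [← Real.rpow_add hε0]; norm_num
    have hfrac : t / ε ^ (2 - p) ≤ ε ^ p := by
      rw [div_le_iff₀ (by positivity), hsplit]; exact htε.le
    have : p / 2 * t / ε ^ (2 - p) ≤ p / 2 * ε ^ p := by
      rw [mul_div_assoc]; gcongr
    nlinarith [Real.rpow_nonneg hε p]
  · have hbern := rpow_one_add_le_one_add_mul_self (s := t - 1) (by linarith)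
      (by linarith : 0 ≤ p / 2) (by linarith)
    rw [add_sub_cancel] at hbern
    nlinarith [Real.rpow_nonneg hε p]

end Psi

lemma deriv2_rpow_add_quadratic {p β a b c y : ℝ} (hy : y ≠ 0) :
    deriv^[2] (fun y => β * y ^ p + a / 2 * y ^ 2 + b * y + c) y =
      β * (p * ((p - 1) * y ^ (p - 2))) + a := by
  have hderiv : ∀ z : ℝ, z ≠ 0 →
      HasDerivAt (fun y => β * y ^ p + a / 2 * y ^ 2 + b * y + c)
        (β * (p * z ^ (p - 1)) + a * z + b) z := by
    intro z hz
    refine ((((Real.hasDerivAt_rpow_const (p := p) (Or.inl hz)).const_mul β).add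
      ((hasDerivAt_pow 2 z).const_mul (a / 2))).add ((hasDerivAt_id z).const_mul b)).add_const c
      |>.congr_deriv ?_
    norm_num; ring
  have hderiv2 : HasDerivAt (fun y => β * (p * y ^ (p - 1)) + a * y + b)
      (β * (p * ((p - 1) * y ^ (p - 2))) + a) y := by
    refine ((((Real.hasDerivAt_rpow_const (p := p - 1) (Or.inl hy)).const_mul p).const_mul β).add
      ((hasDerivAt_id y).const_mul a)).add_const b |>.congr_deriv ?_
    norm_num [sub_sub]
  have hd : deriv (fun y => β * y ^ p + a / 2 * y ^ 2 + b * y + c) =ᶠ[𝓝 y]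
      fun y => β * (p * y ^ (p - 1)) + a * y + b :=
    (eventually_ne_nhds hy).mono fun z hz => (hderiv z hz).deriv
  change deriv (deriv _) y = _
  rw [hd.deriv_eq]
  exact hderiv2.deriv

lemma strictConcaveOn_rpow_add_quadratic {p β a b c : ℝ} (hp0 : 0 < p) (hp1 : p < 1)
    (hβ : 0 < β) (ha : 0 < a) :
    StrictConcaveOn ℝ (Icc 0 ((β * p * (1 - p) / a) ^ ((1 : ℝ) / (2 - p))))
      (fun y => β * y ^ p + a / 2 * y ^ 2 + b * y + c) := by
  set κ := β * p * (1 - p) / a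
  have hκ : 0 < κ := div_pos (mul_pos (mul_pos hβ hp0) (by linarith)) ha
  refine strictConcaveOn_of_deriv2_neg (convex_Icc _ _) (by fun_prop (disch := positivity)) ?_
  rw [interior_Icc]
  rintro y ⟨hy0, hyκ⟩
  have hY : 0 < y ^ (2 - p) := by positivity
  have hpow : y ^ (2 - p) < κ := by
    calc y ^ (2 - p) < (κ ^ ((1 : ℝ) / (2 - p))) ^ (2 - p) :=
          Real.rpow_lt_rpow hy0.le hyκ (by linarith)
      _ = κ := by rw [← Real.rpow_mul hκ.le, one_div_mul_cancel (by linarith), Real.rpow_one]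
  have haY : a * y ^ (2 - p) < β * p * (1 - p) := by
    calc a * y ^ (2 - p) < a * κ := by gcongr
      _ = β * p * (1 - p) := mul_div_cancel₀ _ ha.ne'
  have hinv : y ^ (p - 2) = (y ^ (2 - p))⁻¹ := by
    rw [← Real.rpow_neg hy0.le, neg_sub]
  have : a < β * p * (1 - p) * (y ^ (2 - p))⁻¹ := by
    rw [← div_eq_mul_inv, lt_div_iff₀ hY]; linarith
  rw [deriv2_rpow_add_quadratic hy0.ne', hinv]
  linarith

noncomputable def proxIntegrand (p β α r ε u t : ℝ) : ℝ :=
  1 / (2 * r) * (t - u) ^ 2 + β * psi p ε (t ^ 2) + α / 2 * t ^ 2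

noncomputable def sparsityThreshold (p β α r : ℝ) : ℝ :=
  (r * β * p * (1 - p) / (1 + α * r)) ^ ((1 : ℝ) / (2 - p))

section Scalar

variable {p β α r ε : ℝ}

lemma proxIntegrand_neg (u t : ℝ) :
    proxIntegrand p β α r ε u (-t) = proxIntegrand p β α r ε (-u) t := by
  simp only [proxIntegrand, neg_sq]
  ring

lemma measurable_proxIntegrand : Measurable (Function.uncurry (proxIntegrand p β α r ε)) := by
  have hψ := measurable_psi p ε
  unfold proxIntegrand Function.uncurry
  fun_prop

lemma proxIntegrand_eq_of_le (hε : 0 ≤ ε) (u : ℝ) {y : ℝ} (hy : ε ≤ y) :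
    proxIntegrand p β α r ε u y =
      β * y ^ p + (1 / r + α) / 2 * y ^ 2 + -u / r * y + u ^ 2 / (2 * r) := by
  rw [proxIntegrand, psi_sq_of_le hε hy]
  ring

lemma sparsityThreshold_eq (hr : 0 < r) (hα : 0 ≤ α) :
    sparsityThreshold p β α r = (β * p * (1 - p) / (1 / r + α)) ^ ((1 : ℝ) / (2 - p)) := by
  rw [sparsityThreshold]
  congr 1
  field_simp

lemma min_proxIntegrand_lt (hp0 : 0 < p) (hp1 : p < 1) (hβ : 0 < β) (hα : 0 ≤ α) (hr : 0 < r)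
    (hε : 0 ≤ ε) (u : ℝ) {z : ℝ} (hεz : ε < z) (hzc : z < sparsityThreshold p β α r) :
    min (proxIntegrand p β α r ε u ε) (proxIntegrand p β α r ε u (sparsityThreshold p β α r)) <
      proxIntegrand p β α r ε u z := by
  set c := sparsityThreshold p β α r
  have hεc : ε < c := hεz.trans hzc
  have hconc := strictConcaveOn_rpow_add_quadratic (b := -u / r) (c := u ^ 2 / (2 * r))
    hp0 hp1 hβ (by positivity : 0 < 1 / r + α)
  rw [← sparsityThreshold_eq hr hα] at hconc
  replace hconc := hconc.subset (Icc_subset_Icc_left hε) (convex_Icc ε c)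
  have hlt := hconc.lt_on_openSegment (left_mem_Icc.2 hεc.le) (right_mem_Icc.2 hεc.le) hεc.ne
    (by rw [openSegment_eq_Ioo hεc]; exact ⟨hεz, hzc⟩)
  rwa [proxIntegrand_eq_of_le hε u le_rfl, proxIntegrand_eq_of_le hε u hεc.le,
    proxIntegrand_eq_of_le hε u hεz.le]

lemma min_proxIntegrand_sign_lt (hp0 : 0 < p) (hp1 : p < 1) (hβ : 0 < β) (hα : 0 ≤ α)
    (hr : 0 < r) (hε : 0 ≤ ε) (u : ℝ) {t : ℝ} (hεt : ε < |t|)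
    (htc : |t| < sparsityThreshold p β α r) :
    min (proxIntegrand p β α r ε u (ε * t.sign))
        (proxIntegrand p β α r ε u (sparsityThreshold p β α r * t.sign)) <
      proxIntegrand p β α r ε u t := by
  rcases lt_or_gt_of_ne (abs_pos.1 (hε.trans_lt hεt)) with ht | ht
  · rw [abs_of_neg ht] at hεt htc
    rw [Real.sign_of_neg ht, mul_neg_one, mul_neg_one, proxIntegrand_neg, proxIntegrand_neg,
      ← neg_neg t, proxIntegrand_neg u (-t)]
    exact min_proxIntegrand_lt hp0 hp1 hβ hα hr hε (-u) hεt htc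
  · rw [abs_of_pos ht] at hεt htc
    rw [Real.sign_of_pos ht, mul_one, mul_one]
    exact min_proxIntegrand_lt hp0 hp1 hβ hα hr hε u hεt htc

end Scalar

lemma Real.measurable_sign : Measurable Real.sign :=
  Measurable.ite (measurableSet_lt measurable_id measurable_const) measurable_const <|
    Measurable.ite (measurableSet_lt measurable_const measurable_id) measurable_const
      measurable_const

lemma Real.abs_sign_le_one (t : ℝ) : |t.sign| ≤ 1 := by
  rcases Real.sign_apply_eq t with h | h | h <;> simp [h]

noncomputable def proxImprove (p β α r ε u t : ℝ) : ℝ :=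
  if ε < |t| ∧ |t| < sparsityThreshold p β α r then
    if proxIntegrand p β α r ε u (ε * t.sign) ≤
        proxIntegrand p β α r ε u (sparsityThreshold p β α r * t.sign)
    then ε * t.sign else sparsityThreshold p β α r * t.sign
  else t

section Improve

variable {p β α r ε : ℝ}

lemma proxIntegrand_proxImprove_lt (hp0 : 0 < p) (hp1 : p < 1) (hβ : 0 < β) (hα : 0 ≤ α)
    (hr : 0 < r) (hε : 0 ≤ ε) (u : ℝ) {t : ℝ} (hεt : ε < |t|)
    (htc : |t| < sparsityThreshold p β α r) :
    proxIntegrand p β α r ε u (proxImprove p β α r ε u t) < proxIntegrand p β α r ε u t := by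
  have hmin := min_proxIntegrand_sign_lt hp0 hp1 hβ hα hr hε u hεt htc
  rw [proxImprove, if_pos ⟨hεt, htc⟩]
  split_ifs with hle
  · rwa [min_eq_left hle] at hmin
  · rwa [min_eq_right (le_of_not_ge hle)] at hmin

lemma proxIntegrand_proxImprove_le (hp0 : 0 < p) (hp1 : p < 1) (hβ : 0 < β) (hα : 0 ≤ α)
    (hr : 0 < r) (hε : 0 ≤ ε) (u t : ℝ) :
    proxIntegrand p β α r ε u (proxImprove p β α r ε u t) ≤ proxIntegrand p β α r ε u t := by
  by_cases hgap : ε < |t| ∧ |t| < sparsityThreshold p β α r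
  · exact (proxIntegrand_proxImprove_lt hp0 hp1 hβ hα hr hε u hgap.1 hgap.2).le
  · rw [proxImprove, if_neg hgap]

lemma abs_proxImprove_le (hε : 0 ≤ ε) (u t : ℝ) :
    |proxImprove p β α r ε u t| ≤ |t| + |sparsityThreshold p β α r| := by
  unfold proxImprove
  split_ifs with hgap
  · rw [abs_mul, abs_of_nonneg hε]
    nlinarith [Real.abs_sign_le_one t, abs_nonneg (sparsityThreshold p β α r)]
  · rw [abs_mul]
    nlinarith [Real.abs_sign_le_one t, abs_nonneg (sparsityThreshold p β α r), abs_nonneg t]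
  · linarith [abs_nonneg (sparsityThreshold p β α r)]

lemma measurable_proxImprove : Measurable (Function.uncurry (proxImprove p β α r ε)) := by
  have hsign : Measurable fun q : ℝ × ℝ => q.2.sign := Real.measurable_sign.comp measurable_snd
  have hcand : ∀ a : ℝ, Measurable fun q : ℝ × ℝ => proxIntegrand p β α r ε q.1 (a * q.2.sign) :=
    fun a => measurable_proxIntegrand.comp (measurable_fst.prodMk (hsign.const_mul a))
  refine Measurable.ite ?_ (Measurable.ite (measurableSet_le (hcand _) (hcand _))
    (hsign.const_mul _) (hsign.const_mul _)) measurable_snd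
  exact (measurableSet_lt measurable_const measurable_snd.abs).inter
    (measurableSet_lt measurable_snd.abs measurable_const)

end Improve

section Integral

variable {X : Type*} [MeasurableSpace X] {μ : Measure X}

lemma Lp.norm_sq_eq_integral_sq (f : Lp ℝ 2 μ) : ‖f‖ ^ 2 = ∫ x, f x ^ 2 ∂μ := by
  rw [← real_inner_self_eq_norm_sq, L2.inner_def]
  simp [sq]

variable [IsFiniteMeasure μ] {p β α r ε : ℝ}

lemma integrable_psi_sq (hp0 : 0 ≤ p) (hp2 : p ≤ 2) (hε : 0 ≤ ε) {f : X → ℝ}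
    (hf : MemLp f 2 μ) : Integrable (fun x => psi p ε (f x ^ 2)) μ := by
  refine ((integrable_const (ε ^ p + 1)).add hf.integrable_sq).mono'
    ((measurable_psi p ε).comp_aemeasurable (hf.1.aemeasurable.pow_const 2)).aestronglyMeasurable
    (ae_of_all _ fun x => ?_)
  rw [Real.norm_eq_abs, abs_of_nonneg (psi_nonneg hp0 hp2 hε (sq_nonneg _)), Pi.add_apply,
    add_assoc]
  exact psi_le hp0 hp2 hε (sq_nonneg _)

lemma integrable_proxIntegrand (hp0 : 0 ≤ p) (hp2 : p ≤ 2) (hε : 0 ≤ ε) {u w : X → ℝ}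
    (hu : MemLp u 2 μ) (hw : MemLp w 2 μ) :
    Integrable (fun x => proxIntegrand p β α r ε (u x) (w x)) μ :=
  (((hw.sub hu).integrable_sq.const_mul _).add ((integrable_psi_sq hp0 hp2 hε hw).const_mul _)).add
    (hw.integrable_sq.const_mul _)

lemma integral_proxIntegrand (hp0 : 0 ≤ p) (hp2 : p ≤ 2) (hε : 0 ≤ ε) {u w : X → ℝ}
    (hu : MemLp u 2 μ) (hw : MemLp w 2 μ) :
    ∫ x, proxIntegrand p β α r ε (u x) (w x) ∂μ =
      1 / (2 * r) * ∫ x, (w x - u x) ^ 2 ∂μ + β * ∫ x, psi p ε (w x ^ 2) ∂μ +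
        α / 2 * ∫ x, w x ^ 2 ∂μ := by
  have h1 : Integrable (fun x => 1 / (2 * r) * (w x - u x) ^ 2) μ :=
    (hw.sub hu).integrable_sq.const_mul _
  have h2 := (integrable_psi_sq hp0 hp2 hε hw).const_mul β
  have h12 : Integrable (fun x => 1 / (2 * r) * (w x - u x) ^ 2 + β * psi p ε (w x ^ 2)) μ :=
    h1.add h2
  simp only [proxIntegrand]
  rw [integral_add h12 (hw.integrable_sq.const_mul _), integral_add h1 h2, integral_const_mul,
    integral_const_mul, integral_const_mul]

lemma proxEnergy_eq_integral (hp0 : 0 ≤ p) (hp2 : p ≤ 2) (hε : 0 ≤ ε) (u w : Lp ℝ 2 μ) :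
    1 / (2 * r) * ‖w - u‖ ^ 2 + β * ∫ x, psi p ε (w x ^ 2) ∂μ + α / 2 * ‖w‖ ^ 2 =
      ∫ x, proxIntegrand p β α r ε (u x) (w x) ∂μ := by
  rw [integral_proxIntegrand hp0 hp2 hε (Lp.memLp u) (Lp.memLp w),
    Lp.norm_sq_eq_integral_sq, Lp.norm_sq_eq_integral_sq,
    integral_congr_ae ((Lp.coeFn_sub w u).mono fun x hx => by rw [hx, Pi.sub_apply])]

lemma memLp_proxImprove (hε : 0 ≤ ε) {u v : X → ℝ} (hu : AEStronglyMeasurable u μ)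
    (hv : MemLp v 2 μ) : MemLp (fun x => proxImprove p β α r ε (u x) (v x)) 2 μ := by
  refine (hv.norm.add (memLp_const |sparsityThreshold p β α r|)).of_le
    (measurable_proxImprove.comp_aemeasurable
      (hu.aemeasurable.prodMk hv.1.aemeasurable)).aestronglyMeasurable
    (ae_of_all _ fun x => ?_)
  simp only [Real.norm_eq_abs, Pi.add_apply]
  exact (abs_proxImprove_le hε (u x) (v x)).trans (le_abs_self _)

end Integral

theorem prox_sparsity_general
    {d : ℕ} (Ω : Set (EuclideanSpace ℝ (Fin d)))
    (hΩ_bdd : Bornology.IsBounded Ω)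
    (p β α r ε : ℝ) (hp0 : 0 < p) (hp1 : p < 1) (hβ : 0 < β) (hα : 0 ≤ α)
    (hr : 0 < r) (hε : 0 ≤ ε)
    (ubar v : Lp ℝ 2 (volume.restrict Ω))
    (hmin : ∀ w : Lp ℝ 2 (volume.restrict Ω),
      1 / (2 * r) * ‖v - ubar‖ ^ 2 + β * ∫ x, psi p ε (v x ^ 2) ∂(volume.restrict Ω) +
          α / 2 * ‖v‖ ^ 2 ≤
        1 / (2 * r) * ‖w - ubar‖ ^ 2 + β * ∫ x, psi p ε (w x ^ 2) ∂(volume.restrict Ω) +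
          α / 2 * ‖w‖ ^ 2) :
    ∀ᵐ x ∂(volume.restrict Ω),
      |v x| ≤ ε ∨ (r * β * p * (1 - p) / (1 + α * r)) ^ ((1 : ℝ) / (2 - p)) ≤ |v x| := by
  have : IsFiniteMeasure (volume.restrict Ω) :=
    isFiniteMeasure_restrict.2 hΩ_bdd.measure_lt_top.ne
  have hp2 : p ≤ 2 := by linarith
  set g := fun x t => proxIntegrand p β α r ε (ubar x) t
  set w := fun x => proxImprove p β α r ε (ubar x) (v x)
  have hw : MemLp w 2 (volume.restrict Ω) :=
    memLp_proxImprove hε (Lp.aestronglyMeasurable ubar) (Lp.memLp v)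
  have hgv : Integrable (fun x => g x (v x)) (volume.restrict Ω) :=
    integrable_proxIntegrand hp0.le hp2 hε (Lp.memLp ubar) (Lp.memLp v)
  have hgw : Integrable (fun x => g x (w x)) (volume.restrict Ω) :=
    integrable_proxIntegrand hp0.le hp2 hε (Lp.memLp ubar) hw
  have hwv : ∀ x, g x (w x) ≤ g x (v x) :=
    fun x => proxIntegrand_proxImprove_le hp0 hp1 hβ hα hr hε (ubar x) (v x)
  have hvw : ∫ x, g x (v x) ∂(volume.restrict Ω) ≤ ∫ x, g x (w x) ∂(volume.restrict Ω) := by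
    have hmin_w := hmin (hw.toLp w)
    rw [proxEnergy_eq_integral hp0.le hp2 hε, proxEnergy_eq_integral hp0.le hp2 hε] at hmin_w
    exact hmin_w.trans_eq (integral_congr_ae (hw.coeFn_toLp.mono fun x hx => congrArg (g x) hx))
  have hae := (integral_eq_iff_of_ae_le hgw hgv (ae_of_all _ hwv)).1
    ((integral_mono hgw hgv hwv).antisymm hvw)
  filter_upwards [hae] with x hx
  by_contra! hgap
  exact (proxIntegrand_proxImprove_lt hp0 hp1 hβ hα hr hε (ubar x) hgap.1 hgap.2).ne hx

/-- if `v` globally minimizes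
`w ↦ (1/(2r))‖w − ū‖² + β∫_Ω ψ_ε(w²) dx + (α/2)‖w‖²` over `L²(Ω)`, then a.e. either
`|v| ≤ ε` or `|v| ≥ (rβp(1 − p)/(1 + αr))^{1/(2−p)}`. -/
theorem prox_sparsity
    {d : ℕ} (hd : 1 ≤ d) (Ω : Set (EuclideanSpace ℝ (Fin d)))
    (hΩ_open : IsOpen Ω) (hΩ_conn : IsConnected Ω) (hΩ_bdd : Bornology.IsBounded Ω)
    (p β α r ε : ℝ) (hp0 : 0 < p) (hp1 : p < 1) (hβ : 0 < β) (hα : 0 ≤ α)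
    (hr : 0 < r) (hε : 0 ≤ ε)
    (ubar v : Lp ℝ 2 (volume.restrict Ω))
    (hmin : ∀ w : Lp ℝ 2 (volume.restrict Ω),
      1 / (2 * r) * ‖v - ubar‖ ^ 2 + β * ∫ x, psi p ε (v x ^ 2) ∂(volume.restrict Ω) +
          α / 2 * ‖v‖ ^ 2 ≤
        1 / (2 * r) * ‖w - ubar‖ ^ 2 + β * ∫ x, psi p ε (w x ^ 2) ∂(volume.restrict Ω) +
          α / 2 * ‖w‖ ^ 2) :
    ∀ᵐ x ∂(volume.restrict Ω),
      |v x| ≤ ε ∨ (r * β * p * (1 - p) / (1 + α * r)) ^ ((1 : ℝ) / (2 - p)) ≤ |v x| :=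
  prox_sparsity_general Ω hΩ_bdd p β α r ε hp0 hp1 hβ hα hr hε ubar v hmin
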